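/- arXiv:2308.01152 — 2 statements merged into one kernel-verified Lean document; each statement's English description precedes it below -/
import Mathlib

section
/- As Y → ∞, ∑_{n ≤ Y, n even} g(n) = (½·∏_{p prime, p > 2} (1 + 1/(p(p − 2))) + o(1))·Y, where the infinite product over odd primes converges. -/
/-!
Write `g = h * 1` (Dirichlet convolution, `h = gMoebius`) with `h` multiplicative, supported on
odd squarefree numbers and `h p = 1 / (p - 2)` for odd primes `p`. Then
`∑_{n ≤ X} g n = ∑_d h d ⌊X / d⌋`, and since `∑ h d / d` converges (its partial Euler products are
bounded by `exp (∑ 3 / k²)`), dominated convergence gives `∑_{n ≤ X} g n ~ C X` with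
`C = ∑ h d / d = ∏_{p > 2} (1 + 1 / (p (p - 2)))`. Finally `g (2 n) = g n`, so the sum over even
`n ≤ Y` is the sum over all `m ≤ Y / 2`.
-/

open Filter

/-- The multiplicative function `g(m) = ∏_{p ∣ m, p > 2 prime} (p-1)/(p-2)`. -/
noncomputable def gFun (m : ℕ) : ℝ :=
  ∏ p ∈ m.primeFactors.filter (fun p => 2 < p), ((p : ℝ) - 1) / ((p : ℝ) - 2)

open Finset Topology ArithmeticFunction
open scoped ArithmeticFunction.zeta

theorem tendsto_natCast_div_div_natCast (d : ℕ) :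
    Tendsto (fun N : ℕ => ((N / d : ℕ) : ℝ) / N) atTop (𝓝 (d : ℝ)⁻¹) := by
  rcases Nat.eq_zero_or_pos d with rfl | hd
  · simp -- `N / 0 = 0` and `0⁻¹ = 0`
  have hd' : (0 : ℝ) < d := by exact_mod_cast hd
  have hlim := (tendsto_nat_floor_div_atTop (R := ℝ)).comp
    ((tendsto_natCast_atTop_atTop (R := ℝ)).atTop_div_const hd')
  rw [← one_mul (d : ℝ)⁻¹]
  refine (hlim.mul_const (d : ℝ)⁻¹).congr' ?_
  filter_upwards [eventually_ne_atTop 0] with N hN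
  simp only [Function.comp_apply, Nat.floor_div_eq_div]
  field_simp

theorem natCast_div_div_natCast_le (N d : ℕ) : ((N / d : ℕ) : ℝ) / N ≤ (d : ℝ)⁻¹ :=
  calc ((N / d : ℕ) : ℝ) / N ≤ (N / d : ℝ) / N := by gcongr; exact Nat.cast_div_le
    _ = (N / N : ℝ) / d := div_right_comm _ _ _
    _ ≤ (d : ℝ)⁻¹ := by rw [← one_div]; gcongr; exact div_self_le_one _

theorem ArithmeticFunction.tendsto_sum_Ioc_mul_zeta_div (f : ArithmeticFunction ℝ)
    (hf : Summable fun d => |f d| / d) :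
    Tendsto (fun N : ℕ => (∑ n ∈ Ioc 0 N, (f * ζ) n) / N) atTop (𝓝 (∑' d, f d / d)) := by
  have hsum (N : ℕ) : (∑ n ∈ Ioc 0 N, (f * ζ) n) / N = ∑' d, f d * ((N / d : ℕ) / N) := by
    rw [sum_Ioc_mul_zeta_eq_sum, sum_div, tsum_eq_sum (s := Ioc 0 N)]
    · exact sum_congr rfl fun d _ => mul_div_assoc _ _ _
    · intro d hd
      rw [mem_Ioc, not_and_or, not_lt, Nat.le_zero, not_le] at hd
      rcases hd with rfl | hd <;> simp [Nat.div_eq_of_lt, *]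
  simp_rw [hsum, div_eq_mul_inv (f _)]
  refine tendsto_tsum_of_dominated_convergence hf
    (fun d => (tendsto_natCast_div_div_natCast d).const_mul (f d)) (Eventually.of_forall ?_)
  intro N d
  rw [norm_mul, Real.norm_eq_abs, div_eq_mul_inv |f d|, Real.norm_of_nonneg (by positivity)]
  exact mul_le_mul_of_nonneg_left (natCast_div_div_natCast_le N d) (abs_nonneg _)

theorem summable_of_prod_primesBelow_tsum_le {f : ℕ → ℝ} (hf : ∀ n, 0 ≤ f n) (hf₀ : f 0 = 0)
    (hf₁ : f 1 = 1) (hmul : ∀ {m n}, m.Coprime n → f (m * n) = f m * f n)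
    (hsum : ∀ {p}, p.Prime → Summable fun e => f (p ^ e)) {B : ℝ}
    (hB : ∀ N : ℕ, ∏ p ∈ N.primesBelow, ∑' e, f (p ^ e) ≤ B) : Summable f := by
  refine summable_of_sum_range_le (c := B) hf fun N => ?_
  obtain ⟨-, hsmooth⟩ := EulerProduct.summable_and_hasSum_smoothNumbers_prod_primesBelow_tsum
    hf₁ hmul (fun hp => (hsum hp).norm) N
  have hind : ∀ d ∈ range N, (N.smoothNumbers).indicator f d = f d := fun d hd =>
    Set.indicator_apply_eq_self.mpr fun hd' => by
      obtain rfl : d = 0 := by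
        by_contra h0
        exact hd' (Nat.mem_smoothNumbers_of_lt (Nat.pos_of_ne_zero h0) (mem_range.mp hd))
      exact hf₀
  have hsummable : Summable ((N.smoothNumbers).indicator f) :=
    summable_subtype_iff_indicator.mp hsmooth.summable
  calc ∑ d ∈ range N, f d = ∑ d ∈ range N, (N.smoothNumbers).indicator f d :=
        (sum_congr rfl hind).symm
    _ ≤ ∑' d, (N.smoothNumbers).indicator f d :=
        hsummable.sum_le_tsum _ fun d _ => Set.indicator_nonneg (fun n _ => hf n) d
    _ = ∏ p ∈ N.primesBelow, ∑' e, f (p ^ e) := by rw [← _root_.tsum_subtype, hsmooth.tsum_eq]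
    _ ≤ B := hB N

noncomputable def gPrimeExcess (p : ℕ) : ℝ := if 2 < p then ((p : ℝ) - 2)⁻¹ else 0

theorem gPrimeExcess_nonneg (p : ℕ) : 0 ≤ gPrimeExcess p := by
  unfold gPrimeExcess
  split_ifs with hp
  · have : (2 : ℝ) < p := by exact_mod_cast hp
    exact inv_nonneg.mpr (by linarith)
  · exact le_rfl

theorem gPrimeExcess_div_le (n : ℕ) : gPrimeExcess n / n ≤ 3 / (n : ℝ) ^ 2 := by
  unfold gPrimeExcess
  split_ifs with hn
  · have : (3 : ℝ) ≤ n := by exact_mod_cast hn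
    rw [← one_div, div_div, div_le_div_iff₀ (by nlinarith) (by positivity)]
    nlinarith
  · rw [zero_div]; positivity

theorem gFun_eq_prod_one_add (n : ℕ) : gFun n = ∏ p ∈ n.primeFactors, (1 + gPrimeExcess p) := by
  rw [gFun, prod_filter]
  refine prod_congr rfl fun p _ => ?_
  unfold gPrimeExcess
  split_ifs with hp
  · have : (p : ℝ) - 2 ≠ 0 := by
      have : (2 : ℝ) < p := by exact_mod_cast hp
      linarith
    field_simp
    ring
  · simp

theorem gFun_two_mul (n : ℕ) : gFun (2 * n) = gFun n := by
  rcases eq_or_ne n 0 with rfl | hn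
  · rfl
  rw [gFun, gFun, Nat.primeFactors_mul two_ne_zero hn, Nat.Prime.primeFactors Nat.prime_two,
    filter_union, filter_singleton, if_neg (lt_irrefl 2), empty_union]

theorem sum_filter_two_dvd_gFun (Y : ℕ) :
    ∑ n ∈ (Icc 1 Y).filter (fun n => 2 ∣ n), gFun n = ∑ m ∈ Ioc 0 (Y / 2), gFun m := by
  symm
  refine sum_nbij' (fun m => 2 * m) (fun n => n / 2) ?_ ?_ ?_ ?_ ?_
  · intro m hm; simp only [mem_Ioc, mem_filter, mem_Icc] at hm ⊢; omega
  · intro n hn; simp only [mem_Ioc, mem_filter, mem_Icc] at hn ⊢; omega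
  · intro m _; simp
  · intro n hn; simp only [mem_filter] at hn; exact Nat.mul_div_cancel' hn.2
  · intro m _; exact (gFun_two_mul m).symm

noncomputable def gMoebius : ArithmeticFunction ℝ :=
  ⟨fun d => if Squarefree d then ∏ p ∈ d.primeFactors, gPrimeExcess p else 0, by simp⟩

theorem gMoebius_apply (d : ℕ) :
    gMoebius d = if Squarefree d then ∏ p ∈ d.primeFactors, gPrimeExcess p else 0 := rfl

theorem gMoebius_nonneg (d : ℕ) : 0 ≤ gMoebius d := by
  rw [gMoebius_apply]
  split_ifs
  · exact prod_nonneg fun p _ => gPrimeExcess_nonneg p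
  · exact le_rfl

theorem isMultiplicative_gMoebius : gMoebius.IsMultiplicative := by
  rw [IsMultiplicative.iff_ne_zero]
  refine ⟨by simp [gMoebius_apply], fun {m n} hm hn hmn => ?_⟩
  simp only [gMoebius_apply, Nat.squarefree_mul hmn, ite_zero_mul_ite_zero,
    Nat.primeFactors_mul hm hn, prod_union hmn.disjoint_primeFactors]

theorem gMoebius_apply_prime {p : ℕ} (hp : p.Prime) : gMoebius p = gPrimeExcess p := by
  rw [gMoebius_apply, if_pos hp.squarefree, hp.primeFactors, prod_singleton]

theorem gMoebius_apply_prime_pow_eq_zero {p k : ℕ} (hp : p.Prime) (hk : 2 ≤ k) :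
    gMoebius (p ^ k) = 0 := by
  rw [gMoebius_apply, if_neg]
  exact fun h => hp.one_lt.ne' (Nat.isUnit_iff.mp
    (h p (by simpa [pow_two] using pow_dvd_pow p hk)))

theorem gMoebius_mul_zeta_apply {n : ℕ} (hn : n ≠ 0) : (gMoebius * ζ) n = gFun n := by
  have hmul : gMoebius * ζ = prodPrimeFactors fun p => 1 + gPrimeExcess p := by
    refine (IsMultiplicative.eq_iff_eq_on_prime_powers _
      (isMultiplicative_gMoebius.mul isMultiplicative_zeta.natCast) _
      (IsMultiplicative.prodPrimeFactors _)).mpr fun p k hp => ?_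
    rw [coe_mul_zeta_apply, Nat.sum_divisors_prime_pow hp]
    rcases k with _ | j
    · simp [isMultiplicative_gMoebius.map_one]
    rw [sum_range_succ', sum_range_succ',
      sum_eq_zero fun i _ => gMoebius_apply_prime_pow_eq_zero hp (by omega),
      prodPrimeFactors_apply (pow_ne_zero _ hp.ne_zero),
      Nat.primeFactors_prime_pow j.succ_ne_zero hp, prod_singleton, pow_one, pow_zero,
      gMoebius_apply_prime hp, isMultiplicative_gMoebius.map_one]
    ring
  rw [hmul, prodPrimeFactors_apply hn, gFun_eq_prod_one_add]

theorem gMoebius_div_mul_of_coprime {m n : ℕ} (h : m.Coprime n) :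
    gMoebius (m * n) / (m * n : ℕ) = gMoebius m / m * (gMoebius n / n) := by
  rw [isMultiplicative_gMoebius.map_mul_of_coprime h, Nat.cast_mul, mul_div_mul_comm]

theorem gMoebius_prime_pow_div_eq_zero {p e : ℕ} (hp : p.Prime) (he : e ∉ range 2) :
    gMoebius (p ^ e) / (p ^ e : ℕ) = 0 := by
  rw [gMoebius_apply_prime_pow_eq_zero hp (by simp at he; omega), zero_div]

theorem tsum_gMoebius_prime_pow_div {p : ℕ} (hp : p.Prime) :
    ∑' e, gMoebius (p ^ e) / (p ^ e : ℕ) = 1 + gPrimeExcess p / p := by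
  rw [tsum_eq_sum fun e he => gMoebius_prime_pow_div_eq_zero hp he, sum_range_succ,
    sum_range_one, pow_zero, pow_one, gMoebius_apply_prime hp, isMultiplicative_gMoebius.map_one,
    Nat.cast_one, div_one]

theorem prod_primesBelow_tsum_gMoebius_div_le (N : ℕ) :
    ∏ p ∈ N.primesBelow, ∑' e, gMoebius (p ^ e) / (p ^ e : ℕ) ≤
      Real.exp (∑' k : ℕ, 3 / (k : ℝ) ^ 2) := by
  have hsum : Summable fun k : ℕ => 3 / (k : ℝ) ^ 2 :=
    (Real.summable_one_div_nat_pow.mpr one_lt_two).mul_left 3 |>.congr fun k => by ring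
  rw [prod_congr rfl fun p hp => tsum_gMoebius_prime_pow_div (Nat.prime_of_mem_primesBelow hp)]
  calc ∏ p ∈ N.primesBelow, (1 + gPrimeExcess p / p)
      ≤ Real.exp (∑ p ∈ N.primesBelow, gPrimeExcess p / p) :=
        Real.prod_one_add_le_exp_sum _ fun p => div_nonneg (gPrimeExcess_nonneg p) p.cast_nonneg
    _ ≤ Real.exp (∑ k ∈ range N, 3 / (k : ℝ) ^ 2) := by
        gcongr with p
        calc ∑ p ∈ N.primesBelow, gPrimeExcess p / p ≤ ∑ p ∈ N.primesBelow, 3 / (p : ℝ) ^ 2 :=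
              sum_le_sum fun p _ => gPrimeExcess_div_le p
          _ ≤ ∑ k ∈ range N, 3 / (k : ℝ) ^ 2 :=
              sum_le_sum_of_subset_of_nonneg (filter_subset _ _) fun k _ _ => by positivity
    _ ≤ Real.exp (∑' k : ℕ, 3 / (k : ℝ) ^ 2) := by
        gcongr
        exact hsum.sum_le_tsum _ fun k _ => by positivity

theorem summable_gMoebius_div : Summable fun d => gMoebius d / d :=
  summable_of_prod_primesBelow_tsum_le (fun d => div_nonneg (gMoebius_nonneg d) d.cast_nonneg)
    (by simp) (by simp [isMultiplicative_gMoebius.map_one]) gMoebius_div_mul_of_coprime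
    (fun hp => summable_of_ne_finset_zero fun e he => gMoebius_prime_pow_div_eq_zero hp he)
    prod_primesBelow_tsum_gMoebius_div_le

theorem tendsto_prod_primesBelow_one_add_gPrimeExcess_div :
    Tendsto (fun N : ℕ => ∏ p ∈ N.primesBelow, (1 + gPrimeExcess p / p)) atTop
      (𝓝 (∑' d, gMoebius d / d)) := by
  refine (EulerProduct.eulerProduct (f := fun d => gMoebius d / d)
    (by simp [isMultiplicative_gMoebius.map_one]) gMoebius_div_mul_of_coprime
    summable_gMoebius_div.norm (by simp)).congr fun N => prod_congr rfl fun p hp => ?_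
  exact tsum_gMoebius_prime_pow_div (Nat.prime_of_mem_primesBelow hp)

theorem prod_primesBelow_one_add_gPrimeExcess_div (N : ℕ) :
    ∏ p ∈ N.primesBelow, (1 + gPrimeExcess p / p) =
      ∏ p ∈ (range N).filter (fun p => p.Prime ∧ 2 < p), (1 + 1 / ((p : ℝ) * ((p : ℝ) - 2))) := by
  rw [← filter_filter, ← Nat.primesBelow, prod_filter]
  refine prod_congr rfl fun p _ => ?_
  unfold gPrimeExcess
  split_ifs <;> simp [div_eq_mul_inv, mul_comm]

theorem tendsto_sum_Ioc_gFun_div :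
    Tendsto (fun X : ℕ => (∑ n ∈ Ioc 0 X, gFun n) / X) atTop (𝓝 (∑' d, gMoebius d / d)) := by
  refine (gMoebius.tendsto_sum_Ioc_mul_zeta_div ?_).congr fun X => ?_
  · simpa only [abs_of_nonneg (gMoebius_nonneg _)] using summable_gMoebius_div
  · exact congrArg (· / (X : ℝ)) (sum_congr rfl fun n hn =>
      gMoebius_mul_zeta_apply (mem_Ioc.mp hn).1.ne')

/-- `∑_{n ≤ Y, n even} g(n) = (½ ∏_{p > 2 prime} (1 + 1/(p(p-2))) + o(1)) Y` as `Y → ∞`,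
where the infinite product over odd primes converges. -/
theorem mean_value_g :
    ∃ C : ℝ,
      Filter.Tendsto (fun N : ℕ =>
          ∏ p ∈ (Finset.range N).filter (fun p => p.Prime ∧ 2 < p),
            (1 + 1 / ((p : ℝ) * ((p : ℝ) - 2))))
        Filter.atTop (nhds C) ∧
      Filter.Tendsto (fun Y : ℕ =>
          (∑ n ∈ (Finset.Icc 1 Y).filter (fun n => 2 ∣ n), gFun n) / Y)
        Filter.atTop (nhds (C / 2)) := by
  refine ⟨∑' d, gMoebius d / d, ?_, ?_⟩
  · simpa only [prod_primesBelow_one_add_gPrimeExcess_div]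
      using tendsto_prod_primesBelow_one_add_gPrimeExcess_div
  have hhalf := (tendsto_sum_Ioc_gFun_div.comp (Nat.tendsto_div_const_atTop two_ne_zero)).mul
    (tendsto_natCast_div_div_natCast 2)
  rw [Nat.cast_two, ← div_eq_mul_inv] at hhalf
  refine hhalf.congr' ?_
  filter_upwards [eventually_ge_atTop 2] with Y hY
  have : ((Y / 2 : ℕ) : ℝ) ≠ 0 := by exact_mod_cast (Nat.div_pos hY two_pos).ne'
  rw [Function.comp_apply, sum_filter_two_dvd_gFun, div_mul_div_cancel₀ this]
end

section
/- Let K be a finite Galois extension of ℚ, let α ∈ K be nonzero and not a root of unity, and let σ be an element of the Galois group Gal(K/ℚ). If k and ℓ are integers with α^k = σ(α)^ℓ, then k = ℓ or k = −ℓ. -/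
/-!
Iterating `α ^ k = σ α ^ ℓ` gives `α ^ (k ^ j) = (σ ^ j) α ^ (ℓ ^ j)`. Taking `j` to be the order
of `σ` yields `α ^ (k ^ j) = α ^ (ℓ ^ j)`, so `k ^ j = ℓ ^ j` because `α` has infinite order,
and hence `k = ± ℓ`.
-/

open Function

section PeriodicEndomorphism

variable {G F : Type*} [Group G] [FunLike F G G] [MonoidHomClass F G G] (σ : F)

theorem zpow_pow_eq_iterate_zpow_pow {g : G} {k l : ℤ} (h : g ^ k = σ g ^ l) (j : ℕ) :
    g ^ (k ^ j) = σ^[j] g ^ (l ^ j) := by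
  induction j with
  | zero => simp
  | succ j ih =>
    have hj : σ^[j] g ^ k = σ^[j + 1] g ^ l := by
      rw [← iterate_map_zpow, h, iterate_map_zpow, iterate_succ_apply]
    calc g ^ (k ^ (j + 1)) = (σ^[j] g ^ (l ^ j)) ^ k := by rw [pow_succ, zpow_mul, ih]
      _ = (σ^[j] g ^ k) ^ (l ^ j) := by rw [← zpow_mul, ← zpow_mul, mul_comm]
      _ = σ^[j + 1] g ^ (l ^ (j + 1)) := by rw [hj, ← zpow_mul, pow_succ', mul_comm]

theorem eq_or_eq_neg_of_zpow_eq_map_zpow {g : G} (hg : ¬IsOfFinOrder g)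
    (hper : g ∈ periodicPts σ) {k l : ℤ} (h : g ^ k = σ g ^ l) : k = l ∨ k = -l := by
  obtain ⟨n, hn, hfix⟩ := hper
  have hpow : g ^ (k ^ n) = g ^ (l ^ n) := by
    rw [zpow_pow_eq_iterate_zpow_pow σ h n, hfix.eq]
  have hkl : k ^ n = l ^ n := injective_zpow_iff_not_isOfFinOrder.mpr hg hpow
  rcases (pow_eq_pow_iff_of_ne_zero hn.ne').mp hkl with heq | ⟨hneg, -⟩
  · exact .inl heq
  · exact .inr hneg

end PeriodicEndomorphism

theorem mult_relation_conjugates_general (K : Type*) [Field K] [NumberField K]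
    (α : K) (hα : α ≠ 0) (hroot : ∀ m : ℕ, 0 < m → α ^ m ≠ 1)
    (σ : K ≃ₐ[ℚ] K) (k l : ℤ) (h : α ^ k = (σ α) ^ l) :
    k = l ∨ k = -l := by
  set u := Units.mk0 α hα
  have hu : ¬IsOfFinOrder u := by
    rw [← Units.isOfFinOrder_val, isOfFinOrder_iff_pow_eq_one]
    rintro ⟨m, hm, hm1⟩
    exact hroot m hm hm1
  have hσ : IsOfFinOrder σ := isOfFinOrder_of_finite σ
  have hper : u ∈ periodicPts (Units.map (σ : K →* K)) := by
    refine ⟨orderOf σ, hσ.orderOf_pos, Units.ext ?_⟩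
    have hval : Semiconj Units.val (Units.map (σ : K →* K)) σ := fun _ ↦ rfl
    rw [(hval.iterate_right _) u, ← AlgEquiv.coe_pow, pow_orderOf_eq_one, AlgEquiv.one_apply]
  exact eq_or_eq_neg_of_zpow_eq_map_zpow _ hu hper (Units.ext (by simpa [u] using h))

/-- If `K` is a finite Galois extension of `ℚ`, `α ∈ K` is nonzero and not a root of
unity, `σ ∈ Gal(K/ℚ)`, and `α^k = σ(α)^ℓ` for integers `k, ℓ`, then `k = ℓ` or `k = -ℓ`. -/
theorem mult_relation_conjugates (K : Type*) [Field K] [NumberField K] [IsGalois ℚ K]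
    (α : K) (hα : α ≠ 0) (hroot : ∀ m : ℕ, 0 < m → α ^ m ≠ 1)
    (σ : K ≃ₐ[ℚ] K) (k l : ℤ) (h : α ^ k = (σ α) ^ l) :
    k = l ∨ k = -l :=
  mult_relation_conjugates_general K α hα hroot σ k l h
end
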